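/- arXiv:2208.02347 — 6 statements merged into one kernel-verified Lean document; each statement's English description precedes it below -/
import Mathlib

section
/- Let f : X → X be r-cyclic with respect to the covering X = X_1 ∪ ... ∪ X_m, m ≥ 2, 1 ≤ r < m, and suppose gcd(m, r) = k > 1. Define Y_j = ⋃_{i=0}^{m/k - 1} X_{j + i·r} (indices mod m) for 1 ≤ j ≤ k. Then X = Y_1 ∪ ... ∪ Y_k, each Y_j is invariant under f (f(Y_j) ⊆ Y_j), and the restriction of f to Y_j is a cyclic (1-cyclic) operator with respect to the covering Y_j = X_j ∪ X_{j+r} ∪ ... ∪ X_{j+(m/k−1)r} (in the order listed, f mapping each set of this list into the next one cyclically). -/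
theorem circuits_of_r_cyclic {α : Type*} (m r k : ℕ) (hm : 2 ≤ m) (hr : 1 ≤ r) (hrm : r < m)
    (hk : k = Nat.gcd m r) (hk1 : 1 < k)
    (X : ZMod m → Set α) (hcov : (⋃ i, X i) = Set.univ) (f : α → α)
    (hcyc : ∀ i, ∀ x ∈ X i, f x ∈ X (i + (r : ZMod m))) :
    (⋃ j ∈ Finset.range k, ⋃ i ∈ Finset.range (m / k), X ((j : ZMod m) + ((i * r : ℕ) : ZMod m)))
      = Set.univ ∧
    (∀ j, ∀ x ∈ ⋃ i ∈ Finset.range (m / k), X ((j : ZMod m) + ((i * r : ℕ) : ZMod m)),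
        f x ∈ ⋃ i ∈ Finset.range (m / k), X ((j : ZMod m) + ((i * r : ℕ) : ZMod m))) ∧
    (∀ j : ℕ, ∀ i ∈ Finset.range (m / k),
        ∀ x ∈ X ((j : ZMod m) + ((i * r : ℕ) : ZMod m)),
          f x ∈ X ((j : ZMod m) + (((i + 1) % (m / k) * r : ℕ) : ZMod m))) := by
  haveI : NeZero m := ⟨by omega⟩
  have hkpos : 0 < k := by omega
  have hkm : k ∣ m := hk ▸ Nat.gcd_dvd_left m r
  have hkr : k ∣ r := hk ▸ Nat.gcd_dvd_right m r
  obtain ⟨m', hm'⟩ := hkm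
  obtain ⟨r', hr'⟩ := hkr
  have hmk : m / k = m' := by rw [hm', Nat.mul_div_cancel_left _ hkpos]
  have hm'pos : 0 < m' := by nlinarith
  have key : ((m / k * r : ℕ) : ZMod m) = 0 := by
    rw [ZMod.natCast_eq_zero_iff]
    rw [hmk, hr', hm']
    exact ⟨r', by ring⟩
  -- general modular reduction lemma for multiples of r
  have hred : ∀ a : ℕ, ((a * r : ℕ) : ZMod m) = ((a % (m / k) * r : ℕ) : ZMod m) := by
    intro a
    conv_lhs => rw [← Nat.div_add_mod a (m / k)]
    push_cast
    rw [add_mul]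
    push_cast
    rw [show ((m / k : ℕ) : ZMod m) * (a / (m / k) : ℕ) * (r : ℕ)
        = ((m / k * r : ℕ) : ZMod m) * (a / (m / k) : ℕ) by push_cast; ring, key]
    ring
  -- the third conclusion (cyclic shift), generalized
  have third' : ∀ c : ZMod m, ∀ i ∈ Finset.range (m / k),
      ∀ x ∈ X (c + ((i * r : ℕ) : ZMod m)),
        f x ∈ X (c + (((i + 1) % (m / k) * r : ℕ) : ZMod m)) := by
    intro c i _ x hx
    have := hcyc _ x hx
    have heq : (c + ((i * r : ℕ) : ZMod m)) + (r : ZMod m)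
        = c + (((i + 1) % (m / k) * r : ℕ) : ZMod m) := by
      rw [← hred (i + 1)]
      push_cast
      ring
    rwa [heq] at this
  have third : ∀ j : ℕ, ∀ i ∈ Finset.range (m / k),
      ∀ x ∈ X ((j : ZMod m) + ((i * r : ℕ) : ZMod m)),
        f x ∈ X ((j : ZMod m) + (((i + 1) % (m / k) * r : ℕ) : ZMod m)) :=
    fun j => third' (j : ZMod m)
  -- coverage: every residue is hit
  have hcover : ∀ n : ZMod m, ∃ j < k, ∃ i < m / k,
      (j : ZMod m) + ((i * r : ℕ) : ZMod m) = n := by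
    intro n
    haveI : NeZero m' := ⟨by omega⟩
    set v := n.val with hv
    have hvm : v < m := ZMod.val_lt n
    have hcop : Nat.Coprime m' r' := by
      have := Nat.coprime_div_gcd_div_gcd (m := m) (n := r) (by rw [← hk]; omega)
      rwa [← hk, show m / k = m' from hmk,
        show r / k = r' by rw [hr', Nat.mul_div_cancel_left _ hkpos]] at this
    set q := v / k with hq
    have hqm : q < m' := by
      rw [hq]; apply Nat.div_lt_of_lt_mul
      rw [← hm']; exact hvm
    -- find i with i * r' ≡ q [MOD m']
    obtain ⟨u, hu⟩ : IsUnit ((r' : ZMod m')) := by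
      rw [ZMod.isUnit_iff_coprime]; exact (Nat.coprime_comm.mp hcop)
    set i := (((q : ZMod m') * u⁻¹ : ZMod m')).val with hi
    have hilt : i < m' := ZMod.val_lt _
    have hir' : ((i * r' : ℕ) : ZMod m') = (q : ZMod m') := by
      push_cast
      rw [hi, ZMod.natCast_val, ZMod.cast_id, ← hu, mul_assoc, Units.inv_mul, mul_one]
    have hmod : i * r' ≡ q [MOD m'] := (ZMod.natCast_eq_natCast_iff _ _ _).mp hir'
    have hmod2 : i * r ≡ q * k [MOD m] := by
      rw [hm', hr', mul_comm k m', mul_comm k r']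
      have := Nat.ModEq.mul_right' (c := k) hmod
      rw [← mul_assoc]; exact this
    refine ⟨v % k, Nat.mod_lt _ hkpos, i, by rw [hmk]; exact hilt, ?_⟩
    have : ((i * r : ℕ) : ZMod m) = ((q * k : ℕ) : ZMod m) :=
      (ZMod.natCast_eq_natCast_iff _ _ _).mpr hmod2
    rw [this]
    have hvk : (v % k : ℕ) + q * k = v := by rw [hq]; exact Nat.mod_add_div' v k
    have : ((v % k : ℕ) : ZMod m) + ((q * k : ℕ) : ZMod m) = ((v : ℕ) : ZMod m) := by
      rw [← Nat.cast_add, hvk]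
    rw [this, hv, ZMod.natCast_val, ZMod.cast_id]
  refine ⟨?_, ?_, third⟩
  · apply Set.eq_univ_of_univ_subset
    rw [← hcov]
    intro x hx
    obtain ⟨S, ⟨n, rfl⟩, hxS⟩ := hx
    obtain ⟨j, hj, i, hi, hji⟩ := hcover n
    simp only [Set.mem_iUnion]
    exact ⟨j, Finset.mem_range.mpr hj, i, Finset.mem_range.mpr hi, by rw [hji]; exact hxS⟩
  · intro j x hx
    simp only [Set.mem_iUnion] at hx ⊢
    obtain ⟨i, hi, hxi⟩ := hx
    refine ⟨(i + 1) % (m / k), Finset.mem_range.mpr ?_, third' j i hi x hxi⟩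
    exact Nat.mod_lt _ (by omega)
end

section
/- Let (X, d) be a complete metric space, m ≥ 2, 1 ≤ r < m integers with gcd(m, r) = 1, and X = X_1 ∪ ... ∪ X_m a covering by nonempty closed sets. Suppose f : X → X satisfies f(X_i) ⊆ X_{i+r} for all i (indices mod m) and there is c ∈ [0, 1) such that d(f(x), f(y)) ≤ c·d(x, y) for all x ∈ X_i, y ∈ X_{i+r}, 1 ≤ i ≤ m. Then f has a unique fixed point x* in X, and for every x₀ ∈ X the Picard iteration x_{n+1} = f(x_n) converges to x*. -/
/-!
Starting in `X 0`, consecutive points of a Picard orbit lie in consecutive sets `X (n r)`,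
`X ((n + 1) r)`, so their distances decay geometrically and the orbit converges to some `p`.
Since `gcd (m, r) = 1` the orbit visits every `X j` infinitely often, hence `p` lies in all the
(closed) `X j`. Then `d (f p, f z) ≤ c d (p, z)` for every `z`, whatever piece `z` lies in, and
this pointwise contraction towards `p` makes `p` the unique fixed point and attracts every orbit.
-/

open Filter Topology Function

theorem ZMod.frequently_nsmul_natCast_eq {m r : ℕ} [NeZero m] (h : Nat.Coprime m r)
    (j : ZMod m) : ∃ᶠ n : ℕ in atTop, n • (r : ZMod m) = j := by
  set u := ZMod.unitOfCoprime r h.symm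
  refine (Nat.frequently_modEq (NeZero.ne m) (j * ↑u⁻¹).val).mono fun n hn => ?_
  rw [← ZMod.natCast_eq_natCast_iff, ZMod.natCast_zmod_val] at hn
  rw [nsmul_eq_mul, hn, ← ZMod.coe_unitOfCoprime r h.symm, mul_assoc, Units.inv_mul, mul_one]

section PointwiseContraction

variable {α : Type*} [MetricSpace α] {f : α → α} {c : ℝ} {p : α}

theorem continuousAt_of_dist_map_le (h : ∀ z, dist (f p) (f z) ≤ c * dist p z) :
    ContinuousAt f p := by
  rw [ContinuousAt, tendsto_iff_dist_tendsto_zero]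
  have hc : Tendsto (fun z => c * dist z p) (𝓝 p) (𝓝 0) := by
    simpa using ((continuous_id.dist (continuous_const (y := p))).tendsto p).const_mul c
  exact squeeze_zero (fun _ => dist_nonneg) (fun z => by rw [dist_comm, dist_comm z]; exact h z) hc

theorem eq_of_isFixedPt_of_dist_le (h : ∀ z, dist (f p) (f z) ≤ c * dist p z) (hc1 : c < 1)
    (hp : IsFixedPt f p) {y : α} (hy : IsFixedPt f y) : y = p := by
  have hle := h y
  rw [hp.eq, hy.eq] at hle
  have hzero : dist p y ≤ 0 := by nlinarith [dist_nonneg (x := p) (y := y)]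
  exact (dist_le_zero.mp hzero).symm

theorem dist_iterate_le_of_dist_le (h : ∀ z, dist (f p) (f z) ≤ c * dist p z) (hc0 : 0 ≤ c)
    (hp : IsFixedPt f p) (y : α) (n : ℕ) : dist (f^[n] y) p ≤ c ^ n * dist y p := by
  induction n with
  | zero => simp
  | succ n ih =>
    calc dist (f^[n + 1] y) p = dist (f p) (f (f^[n] y)) := by
          rw [iterate_succ_apply', hp.eq, dist_comm]
      _ ≤ c * dist (f^[n] y) p := by rw [dist_comm (f^[n] y)]; exact h _
      _ ≤ c * (c ^ n * dist y p) := mul_le_mul_of_nonneg_left ih hc0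
      _ = c ^ (n + 1) * dist y p := by ring

theorem tendsto_iterate_of_dist_le (h : ∀ z, dist (f p) (f z) ≤ c * dist p z) (hc0 : 0 ≤ c)
    (hc1 : c < 1) (hp : IsFixedPt f p) (y : α) :
    Tendsto (fun n => f^[n] y) atTop (𝓝 p) := by
  rw [tendsto_iff_dist_tendsto_zero]
  have hgeo : Tendsto (fun n : ℕ => c ^ n * dist y p) atTop (𝓝 0) := by
    simpa using (tendsto_pow_atTop_nhds_zero_of_lt_one hc0 hc1).mul_const (dist y p)
  exact squeeze_zero (fun _ => dist_nonneg) (dist_iterate_le_of_dist_le h hc0 hp y) hgeo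

end PointwiseContraction

section CyclicMap

variable {α G : Type*} {X : G → Set α} {f : α → α} {g : G} {c : ℝ}

theorem iterate_mem_add_nsmul [AddMonoid G] (hcyc : ∀ i, ∀ x ∈ X i, f x ∈ X (i + g))
    {i : G} {x : α} (hx : x ∈ X i) (n : ℕ) : f^[n] x ∈ X (i + n • g) := by
  induction n with
  | zero => simpa using hx
  | succ n ih => simpa [iterate_succ_apply', succ_nsmul, add_assoc] using hcyc _ _ ih

theorem dist_iterate_succ_le_geometric [MetricSpace α] [AddMonoid G]
    (hcyc : ∀ i, ∀ x ∈ X i, f x ∈ X (i + g))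
    (hcontr : ∀ i, ∀ x ∈ X i, ∀ y ∈ X (i + g), dist (f x) (f y) ≤ c * dist x y)
    (hc0 : 0 ≤ c) {i : G} {x : α} (hx : x ∈ X i) (n : ℕ) :
    dist (f^[n] x) (f^[n + 1] x) ≤ dist x (f x) * c ^ n := by
  induction n with
  | zero => simp
  | succ n ih =>
    have hn := iterate_mem_add_nsmul hcyc hx n
    calc dist (f^[n + 1] x) (f^[n + 2] x) = dist (f (f^[n] x)) (f (f^[n + 1] x)) := by
          simp only [iterate_succ_apply']
      _ ≤ c * dist (f^[n] x) (f^[n + 1] x) := by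
          refine hcontr _ _ hn _ ?_
          rw [iterate_succ_apply']
          exact hcyc _ _ hn
      _ ≤ c * (dist x (f x) * c ^ n) := mul_le_mul_of_nonneg_left ih hc0
      _ = dist x (f x) * c ^ (n + 1) := by ring

theorem dist_map_le_of_forall_mem [MetricSpace α] [AddGroup G] (hcov : (⋃ i, X i) = Set.univ)
    (hcontr : ∀ i, ∀ x ∈ X i, ∀ y ∈ X (i + g), dist (f x) (f y) ≤ c * dist x y)
    {p : α} (hp : ∀ i, p ∈ X i) (z : α) : dist (f p) (f z) ≤ c * dist p z := by
  obtain ⟨j, hj⟩ := Set.iUnion_eq_univ_iff.mp hcov z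
  exact hcontr (j - g) p (hp _) z (by rwa [sub_add_cancel])

end CyclicMap

theorem synchronous_r_cyclic_contraction_gcd_one_general {α : Type*} [MetricSpace α] [CompleteSpace α]
    (m r : ℕ) (hm : 2 ≤ m) (hgcd : Nat.gcd m r = 1)
    (X : ZMod m → Set α) (hne : ∀ i, (X i).Nonempty) (hcl : ∀ i, IsClosed (X i))
    (hcov : (⋃ i, X i) = Set.univ) (f : α → α)
    (hcyc : ∀ i, ∀ x ∈ X i, f x ∈ X (i + (r : ZMod m)))
    (c : ℝ) (hc0 : 0 ≤ c) (hc1 : c < 1)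
    (hcontr : ∀ i, ∀ x ∈ X i, ∀ y ∈ X (i + (r : ZMod m)),
      dist (f x) (f y) ≤ c * dist x y) :
    ∃ xs : α, f xs = xs ∧ (∀ y, f y = y → y = xs) ∧
      ∀ x₀ : α, Tendsto (fun n => f^[n] x₀) atTop (𝓝 xs) := by
  have : NeZero m := ⟨by omega⟩
  obtain ⟨x₀, hx₀⟩ := hne 0
  obtain ⟨p, hp⟩ := cauchySeq_tendsto_of_complete <|
    cauchySeq_of_le_geometric c _ hc1 (dist_iterate_succ_le_geometric hcyc hcontr hc0 hx₀)
  have hp_mem : ∀ j, p ∈ X j := fun j =>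
    (hcl j).mem_of_frequently_of_tendsto
      ((ZMod.frequently_nsmul_natCast_eq hgcd j).mono fun n hn => by
        simpa [hn] using iterate_mem_add_nsmul hcyc hx₀ n) hp
  have hdist := dist_map_le_of_forall_mem hcov hcontr hp_mem
  have hfix := isFixedPt_of_tendsto_iterate hp (continuousAt_of_dist_map_le hdist)
  exact ⟨p, hfix, fun y hy => eq_of_isFixedPt_of_dist_le hdist hc1 hfix hy,
    tendsto_iterate_of_dist_le hdist hc0 hc1 hfix⟩

theorem synchronous_r_cyclic_contraction_gcd_one {α : Type*} [MetricSpace α] [CompleteSpace α]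
    (m r : ℕ) (hm : 2 ≤ m) (hr : 1 ≤ r) (hrm : r < m) (hgcd : Nat.gcd m r = 1)
    (X : ZMod m → Set α) (hne : ∀ i, (X i).Nonempty) (hcl : ∀ i, IsClosed (X i))
    (hcov : (⋃ i, X i) = Set.univ) (f : α → α)
    (hcyc : ∀ i, ∀ x ∈ X i, f x ∈ X (i + (r : ZMod m)))
    (c : ℝ) (hc0 : 0 ≤ c) (hc1 : c < 1)
    (hcontr : ∀ i, ∀ x ∈ X i, ∀ y ∈ X (i + (r : ZMod m)),
      dist (f x) (f y) ≤ c * dist x y) :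
    ∃ xs : α, f xs = xs ∧ (∀ y, f y = y → y = xs) ∧
      ∀ x₀ : α, Tendsto (fun n => f^[n] x₀) atTop (𝓝 xs) :=
  synchronous_r_cyclic_contraction_gcd_one_general m r hm hgcd X hne hcl hcov f hcyc c hc0 hc1
    hcontr
end

section
/- Let (X, d) be a complete metric space, m ≥ 2, 1 ≤ r < m with gcd(m, r) = k > 1, X = X_1 ∪ ... ∪ X_m a covering by nonempty closed sets, and f : X → X a synchronous r-cyclic contraction with constant c ∈ [0,1). Then f has at most k fixed points; more precisely, setting Y_j = ⋃_{i=0}^{m/k−1} X_{j+i·r} for 1 ≤ j ≤ k, every fixed point of f lies in some Y_j, each Y_j contains at most one fixed point of f, and for every starting point in Y_j the Picard iteration of f converges (so f is a weakly Picard operator). -/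
open Filter Topology

theorem synchronous_r_cyclic_contraction_gcd_gt_one {α : Type*} [MetricSpace α] [CompleteSpace α]
    (m r k : ℕ) (hm : 2 ≤ m) (hr : 1 ≤ r) (hrm : r < m)
    (hk : k = Nat.gcd m r) (hk1 : 1 < k)
    (X : ZMod m → Set α) (hne : ∀ i, (X i).Nonempty) (hcl : ∀ i, IsClosed (X i))
    (hcov : (⋃ i, X i) = Set.univ) (f : α → α)
    (hcyc : ∀ i, ∀ x ∈ X i, f x ∈ X (i + (r : ZMod m)))
    (c : ℝ) (hc0 : 0 ≤ c) (hc1 : c < 1)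
    (hcontr : ∀ i, ∀ x ∈ X i, ∀ y ∈ X (i + (r : ZMod m)),
      dist (f x) (f y) ≤ c * dist x y) :
    (∀ x : α, f x = x →
        ∃ j < k, x ∈ ⋃ i ∈ Finset.range (m / k), X ((j : ZMod m) + ((i * r : ℕ) : ZMod m))) ∧
    (∀ j < k, ∀ x y : α, f x = x → f y = y →
        x ∈ (⋃ i ∈ Finset.range (m / k), X ((j : ZMod m) + ((i * r : ℕ) : ZMod m))) →
        y ∈ (⋃ i ∈ Finset.range (m / k), X ((j : ZMod m) + ((i * r : ℕ) : ZMod m))) →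
        x = y) ∧
    (∀ x₀ : α, ∃ p : α, f p = p ∧ Tendsto (fun n => f^[n] x₀) atTop (𝓝 p)) := by
  haveI : NeZero m := ⟨by omega⟩
  have hkm : k ∣ m := hk ▸ Nat.gcd_dvd_left m r
  have hkr : k ∣ r := hk ▸ Nat.gcd_dvd_right m r
  have hdvd : (m:ℕ) ∣ m / k * r := by
    obtain ⟨r', hr'⟩ := hkr
    exact ⟨r', by rw [hr', ← mul_assoc, Nat.div_mul_cancel hkm]⟩
  -- iterate membership
  have hA : ∀ (i : ZMod m) (x : α), x ∈ X i → ∀ n : ℕ,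
      f^[n] x ∈ X (i + ((n * r : ℕ) : ZMod m)) := by
    intro i x hx n
    induction n with
    | zero => simpa using hx
    | succ n ih =>
      have h2 := hcyc _ _ ih
      rw [Function.iterate_succ_apply']
      have : i + ((n * r : ℕ) : ZMod m) + (r : ZMod m)
          = i + (((n+1) * r : ℕ) : ZMod m) := by push_cast; ring
      rwa [this] at h2
  have hgeo : ∀ (i : ZMod m) (x : α), x ∈ X i → ∀ n : ℕ,
      dist (f^[n] x) (f^[n+1] x) ≤ dist x (f x) * c ^ n := by
    intro i x hx n
    induction n with
    | zero => simp
    | succ n ih =>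
      have h1 := hA i x hx n
      have h2 := hA i x hx (n+1)
      have hidx : i + (((n+1) * r : ℕ) : ZMod m)
          = i + ((n * r : ℕ) : ZMod m) + (r : ZMod m) := by push_cast; ring
      rw [hidx] at h2
      have h3 := hcontr _ _ h1 _ h2
      rw [← Function.iterate_succ_apply' f n x, ← Function.iterate_succ_apply' f (n+1) x] at h3
      calc dist (f^[n+1] x) (f^[n+2] x) ≤ c * dist (f^[n] x) (f^[n+1] x) := h3
        _ ≤ c * (dist x (f x) * c ^ n) := by
            exact mul_le_mul_of_nonneg_left ih hc0
        _ = dist x (f x) * c ^ (n+1) := by ring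
  have hconv : ∀ x₀ : α, ∃ p : α, f p = p ∧ Tendsto (fun n => f^[n] x₀) atTop (𝓝 p) := by
    intro x₀
    have hx₀' : x₀ ∈ ⋃ i, X i := hcov ▸ Set.mem_univ x₀
    obtain ⟨i, hx₀⟩ := Set.mem_iUnion.mp hx₀'
    have hcauchy : CauchySeq (fun n => f^[n] x₀) :=
      cauchySeq_of_le_geometric c (dist x₀ (f x₀)) hc1 (fun n => hgeo i x₀ hx₀ n)
    obtain ⟨p, hp⟩ := cauchySeq_tendsto_of_complete hcauchy
    have hmem : ∀ n : ℕ, p ∈ X (i + ((n * r : ℕ) : ZMod m)) := by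
      intro n
      have ht : Tendsto (fun s : ℕ => f^[n + s * m] x₀) atTop (𝓝 p) := by
        apply hp.comp
        apply tendsto_atTop_mono (fun s => ?_) tendsto_id
        have := Nat.le_mul_of_pos_right s (show 0 < m by omega)
        simp only [id]; omega
      refine (hcl _).mem_of_tendsto ht ?_
      filter_upwards with s
      have h1 := hA i x₀ hx₀ (n + s * m)
      have hidx : i + (((n + s * m) * r : ℕ) : ZMod m) = i + ((n * r : ℕ) : ZMod m) := by
        push_cast [ZMod.natCast_self]
        ring
      rwa [hidx] at h1
    have hfp : f p = p := by
      have hkey : ∀ n : ℕ, dist (f^[n+2] x₀) (f p) ≤ c * dist (f^[n+1] x₀) p := by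
        intro n
        have h1 := hmem n
        have h2 := hA i x₀ hx₀ (n+1)
        have hidx : i + (((n+1) * r : ℕ) : ZMod m)
            = i + ((n * r : ℕ) : ZMod m) + (r : ZMod m) := by push_cast; ring
        rw [hidx] at h2
        have h3 := hcontr _ _ h1 _ h2
        rw [← Function.iterate_succ_apply' f (n+1) x₀] at h3
        calc dist (f^[n+2] x₀) (f p) = dist (f p) (f^[n+2] x₀) := dist_comm _ _
          _ ≤ c * dist p (f^[n+1] x₀) := h3
          _ = c * dist (f^[n+1] x₀) p := by rw [dist_comm]
      have h2 : Tendsto (fun n => f^[n+2] x₀) atTop (𝓝 p) := hp.comp (tendsto_add_atTop_nat 2)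
      have h1 : Tendsto (fun n => f^[n+1] x₀) atTop (𝓝 p) := hp.comp (tendsto_add_atTop_nat 1)
      have hb : Tendsto (fun n => c * dist (f^[n+1] x₀) p) atTop (𝓝 (c * 0)) :=
        (tendsto_iff_dist_tendsto_zero.mp h1).const_mul c
      have hd : Tendsto (fun n => dist (f^[n+2] x₀) (f p)) atTop (𝓝 0) :=
        squeeze_zero (fun n => dist_nonneg) hkey (by simpa using hb)
      exact tendsto_nhds_unique (tendsto_iff_dist_tendsto_zero.mpr hd) h2
    exact ⟨p, hfp, hp⟩
  have hrep : ∀ s : ZMod m, ∃ j < k, ∃ i < m / k,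
      ((j : ZMod m) + ((i * r : ℕ) : ZMod m)) = s := by
    intro s
    have hk0 : 0 < k := by omega
    set j := s.val % k with hj
    set t := s.val / k with ht
    have hjk : j < k := Nat.mod_lt _ hk0
    have hb : ((k : ℕ) : ZMod m) = (r : ZMod m) * ((Nat.gcdB m r : ℤ) : ZMod m) := by
      have h := congrArg (fun z : ℤ => (z : ZMod m)) (Nat.gcd_eq_gcd_ab m r)
      rw [← hk] at h
      push_cast at h
      simpa [ZMod.natCast_self] using h
    set w : ZMod m := ((Nat.gcdB m r * (t : ℤ) : ℤ) : ZMod m) with hw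
    set i₀ := w.val with hi₀
    have h1 : ((i₀ * r : ℕ) : ZMod m) = ((k * t : ℕ) : ZMod m) := by
      push_cast
      rw [hi₀, ZMod.natCast_rightInverse w, hw, hb]
      push_cast
      ring
    set i := i₀ % (m / k) with hi
    have hmk0 : 0 < m / k := Nat.div_pos (Nat.le_of_dvd (by omega) hkm) hk0
    have hik : i < m / k := Nat.mod_lt _ hmk0
    have h0 : ((m / k * (i₀ / (m / k)) * r : ℕ) : ZMod m) = 0 :=
      (ZMod.natCast_eq_zero_iff _ _).mpr (hdvd.trans ⟨i₀ / (m / k), by ring⟩)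
    have h2 : ((i₀ * r : ℕ) : ZMod m) = ((i * r : ℕ) : ZMod m) := by
      have hq : i₀ = m / k * (i₀ / (m / k)) + i := (Nat.div_add_mod i₀ (m / k)).symm
      conv_lhs => rw [hq]
      rw [add_mul, Nat.cast_add, h0, zero_add]
    refine ⟨j, hjk, i, hik, ?_⟩
    have h3 : j + k * t = s.val := by
      show s.val % k + k * (s.val / k) = s.val
      rw [add_comm]
      exact Nat.div_add_mod s.val k
    calc (j : ZMod m) + ((i * r : ℕ) : ZMod m)
        = (j : ZMod m) + ((k * t : ℕ) : ZMod m) := by rw [← h2, h1]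
      _ = ((j + k * t : ℕ) : ZMod m) := by push_cast; ring
      _ = ((s.val : ℕ) : ZMod m) := by rw [h3]
      _ = s := ZMod.natCast_rightInverse s
  refine ⟨?_, ?_, hconv⟩
  · intro x hfx
    have hx' : x ∈ ⋃ i, X i := hcov ▸ Set.mem_univ x
    obtain ⟨s, hxs⟩ := Set.mem_iUnion.mp hx'
    obtain ⟨j, hj, i, hi, heq⟩ := hrep s
    exact ⟨j, hj, Set.mem_iUnion₂.mpr ⟨i, Finset.mem_range.mpr hi, by rw [heq]; exact hxs⟩⟩
  · intro j hj x y hfx hfy hxY hyY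
    simp only [Set.mem_iUnion, Finset.mem_range] at hxY hyY
    obtain ⟨i₁, hi₁, hx⟩ := hxY
    obtain ⟨i₂, hi₂, hy⟩ := hyY
    set n := i₂ + m / k - (i₁ + 1) with hn
    have hsum : i₁ + 1 + n = i₂ + m / k := by omega
    have hxn := hA _ x hx n
    rw [Function.iterate_fixed hfx n] at hxn
    have h0 : ((m / k * r : ℕ) : ZMod m) = 0 :=
      (ZMod.natCast_eq_zero_iff _ _).mpr hdvd
    have hnat : i₁ * r + n * r + r = i₂ * r + m / k * r := by
      have := congrArg (fun z => z * r) hsum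
      simp only [add_mul, one_mul] at this
      omega
    have hidx : (j : ZMod m) + ((i₁ * r : ℕ) : ZMod m) + ((n * r : ℕ) : ZMod m) + (r : ZMod m)
        = (j : ZMod m) + ((i₂ * r : ℕ) : ZMod m) := by
      calc (j : ZMod m) + ((i₁ * r : ℕ) : ZMod m) + ((n * r : ℕ) : ZMod m) + (r : ZMod m)
          = (j : ZMod m) + ((i₁ * r + n * r + r : ℕ) : ZMod m) := by push_cast; ring
        _ = (j : ZMod m) + ((i₂ * r + m / k * r : ℕ) : ZMod m) := by rw [hnat]
        _ = (j : ZMod m) + ((i₂ * r : ℕ) : ZMod m) := by rw [Nat.cast_add, h0, add_zero]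
    have hy' : y ∈ X ((j : ZMod m) + ((i₁ * r : ℕ) : ZMod m) + ((n * r : ℕ) : ZMod m)
        + (r : ZMod m)) := by rw [hidx]; exact hy
    have h3 := hcontr _ _ hxn _ hy'
    rw [hfx, hfy] at h3
    have hd0 : dist x y = 0 := by nlinarith [dist_nonneg (x := x) (y := y)]
    exact dist_eq_zero.mp hd0
end

section
/- Let f : X → X be a synchronous r-cyclic contraction with respect to a closed covering X = X_1 ∪ ... ∪ X_m of a complete metric space, with gcd(m, r) = k > 1, and let Y_j = ⋃_{i=0}^{m/k−1} X_{j+i·r}. If the sets Y_1, ..., Y_k are pairwise disjoint, then f has exactly k fixed points, one in each Y_j. -/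
/-!
Along the orbit `i, i + s, i + 2 • s, …` of an index, the Picard iterates of a point of `X i` move
by geometrically decreasing amounts, so they converge. Since `s` has finite order, every
`X (i + a • s)` contains a subsequence of the iterates, hence the limit, and then the contraction
inequality makes the limit a fixed point. Two fixed points on the same orbit lie in adjacent sets
`X j` and `X (j + s)`, so they coincide. In `ZMod m` the orbits of `+ r` are the residue classes
modulo `gcd m r`, which gives exactly one fixed point in each `Y j`.
-/

open Set Filter Topology Function

section CyclicContraction

variable {α G : Type*} [AddMonoid G] {X : G → Set α} {f : α → α} {s : G} {i : G} {x y p : α}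

theorem mapsTo_iterate_add_nsmul (hf : ∀ i, MapsTo f (X i) (X (i + s))) (i : G) (n : ℕ) :
    MapsTo f^[n] (X i) (X (i + n • s)) := by
  induction n with
  | zero => simpa using mapsTo_id (X i)
  | succ n ih =>
    rw [iterate_succ', succ_nsmul, ← add_assoc]
    exact (hf _).comp ih

theorem Function.IsFixedPt.mem_add_nsmul (hf : ∀ i, MapsTo f (X i) (X (i + s)))
    (hx : IsFixedPt f x) (hxi : x ∈ X i) (n : ℕ) : x ∈ X (i + n • s) := by
  simpa [(hx.iterate n).eq] using mapsTo_iterate_add_nsmul hf i n hxi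

theorem mem_of_tendsto_iterate [TopologicalSpace α] (hf : ∀ i, MapsTo f (X i) (X (i + s)))
    (hcl : ∀ i, IsClosed (X i)) (hs : IsOfFinAddOrder s) (hx : x ∈ X i)
    (hp : Tendsto (fun n ↦ f^[n] x) atTop (𝓝 p)) (a : ℕ) : p ∈ X (i + a • s) := by
  set N := addOrderOf s
  have hsub : Tendsto (fun t ↦ a + t * N) atTop atTop :=
    StrictMono.tendsto_atTop <| strictMono_nat_of_lt_succ fun t ↦ by
      have := hs.addOrderOf_pos
      rw [add_mul]
      omega
  have hperiod (t : ℕ) : (a + t * N) • s = a • s := by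
    rw [add_nsmul, mul_nsmul', addOrderOf_nsmul_eq_zero, nsmul_zero, add_zero]
  refine (hcl _).mem_of_tendsto (hp.comp hsub) (Eventually.of_forall fun t ↦ ?_)
  simpa [hperiod] using mapsTo_iterate_add_nsmul hf i (a + t * N) hx

variable [MetricSpace α]

structure IsCyclicContraction (X : G → Set α) (s : G) (c : ℝ) (f : α → α) : Prop where
  mapsTo : ∀ i, MapsTo f (X i) (X (i + s))
  dist_le : ∀ i, ∀ x ∈ X i, ∀ y ∈ X (i + s), dist (f x) (f y) ≤ c * dist x y

variable {c : ℝ}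

namespace IsCyclicContraction

variable (hf : IsCyclicContraction X s c f)
include hf

theorem eq_of_isFixedPt_of_mem_add (hc1 : c < 1) (hx : IsFixedPt f x) (hy : IsFixedPt f y)
    (hxi : x ∈ X i) (hyi : y ∈ X (i + s)) : x = y := by
  have h := hf.dist_le i x hxi y hyi
  rw [hx.eq, hy.eq] at h
  exact dist_le_zero.mp (by nlinarith [dist_nonneg (x := x) (y := y)])

theorem eq_of_isFixedPt_of_mem_add_nsmul (hc1 : c < 1) (hx : IsFixedPt f x)
    (hy : IsFixedPt f y) {a b : ℕ} (hxa : x ∈ X (i + a • s)) (hyb : y ∈ X (i + b • s)) :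
    x = y := by
  have hx' : x ∈ X (i + (a + b) • s) := by
    simpa [add_nsmul, add_assoc] using hx.mem_add_nsmul hf.mapsTo hxa b
  have hy' : y ∈ X (i + (a + b) • s + s) := by
    have hstep : (a + b) • s + s = b • s + (a + 1) • s := by
      rw [← succ_nsmul, ← add_nsmul, Nat.add_comm b, Nat.add_right_comm]
    rw [add_assoc, hstep, ← add_assoc]
    exact hy.mem_add_nsmul hf.mapsTo hyb (a + 1)
  exact hf.eq_of_isFixedPt_of_mem_add hc1 hx hy hx' hy'

theorem dist_iterate_succ_le (hc0 : 0 ≤ c) (hx : x ∈ X i) (n : ℕ) :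
    dist (f^[n] x) (f^[n + 1] x) ≤ dist x (f x) * c ^ n := by
  induction n with
  | zero => simp
  | succ n ih =>
    have hn := mapsTo_iterate_add_nsmul hf.mapsTo i n hx
    rw [iterate_succ_apply' f (n + 1), iterate_succ_apply']
    calc dist (f (f^[n] x)) (f (f (f^[n] x))) ≤ c * dist (f^[n] x) (f (f^[n] x)) :=
          hf.dist_le _ _ hn _ (hf.mapsTo _ hn)
      _ ≤ c * (dist x (f x) * c ^ n) := by
          rw [← iterate_succ_apply' f n]
          exact mul_le_mul_of_nonneg_left ih hc0
      _ = dist x (f x) * c ^ (n + 1) := by ring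

theorem isFixedPt_of_tendsto_iterate (hcl : ∀ i, IsClosed (X i)) (hs : IsOfFinAddOrder s)
    (hx : x ∈ X i) (hp : Tendsto (fun n ↦ f^[n] x) atTop (𝓝 p)) : IsFixedPt f p := by
  have hdist : Tendsto (fun n ↦ c * dist (f^[n] x) p) atTop (𝓝 0) := by
    simpa using (tendsto_iff_dist_tendsto_zero.1 hp).const_mul c
  have hfp : Tendsto (fun n ↦ f^[n + 1] x) atTop (𝓝 (f p)) := by
    refine tendsto_iff_dist_tendsto_zero.2
      (squeeze_zero (fun _ ↦ dist_nonneg) (fun n ↦ ?_) hdist)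
    rw [iterate_succ_apply']
    refine hf.dist_le _ _ (mapsTo_iterate_add_nsmul hf.mapsTo i n hx) _ ?_
    simpa [succ_nsmul, add_assoc] using
      mem_of_tendsto_iterate hf.mapsTo hcl hs hx hp (n + 1)
  exact tendsto_nhds_unique hfp (hp.comp (tendsto_add_atTop_nat 1))

theorem exists_isFixedPt_mem [CompleteSpace α] (hcl : ∀ i, IsClosed (X i))
    (hs : IsOfFinAddOrder s) (hc0 : 0 ≤ c) (hc1 : c < 1) (hne : (X i).Nonempty) :
    ∃ p ∈ X i, IsFixedPt f p := by
  obtain ⟨x, hx⟩ := hne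
  obtain ⟨p, hp⟩ := cauchySeq_tendsto_of_complete
    (cauchySeq_of_le_geometric c _ hc1 (hf.dist_iterate_succ_le hc0 hx))
  exact ⟨p, by simpa using mem_of_tendsto_iterate hf.mapsTo hcl hs hx hp 0,
    hf.isFixedPt_of_tendsto_iterate hcl hs hx hp⟩

end IsCyclicContraction

end CyclicContraction

theorem ZMod.exists_nsmul_natCast_eq_gcd {m : ℕ} [NeZero m] (r : ℕ) :
    ∃ t : ℕ, t • (r : ZMod m) = (m.gcd r : ZMod m) := by
  rcases (Nat.gcd_le_right r (NeZero.pos m)).lt_or_eq with h | h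
  · obtain ⟨t, -, ht⟩ := Nat.exists_mul_mod_eq_gcd h
    refine ⟨t, ?_⟩
    rw [nsmul_eq_mul, Nat.gcd_comm, ← ht, ZMod.natCast_mod]
    push_cast
    ring
  · exact ⟨0, by rw [zero_smul, Nat.gcd_comm, h, ZMod.natCast_self]⟩

theorem ZMod.exists_lt_gcd_add_nsmul {m : ℕ} [NeZero m] (r : ℕ) (i : ZMod m) :
    ∃ j < m.gcd r, ∃ n : ℕ, i = j + n • (r : ZMod m) := by
  have hk : 0 < m.gcd r := Nat.gcd_pos_of_pos_left r (NeZero.pos m)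
  obtain ⟨t, ht⟩ := exists_nsmul_natCast_eq_gcd (m := m) r
  refine ⟨i.val % m.gcd r, Nat.mod_lt _ hk, i.val / m.gcd r * t, ?_⟩
  calc i = ((i.val % m.gcd r + m.gcd r * (i.val / m.gcd r) : ℕ) : ZMod m) := by
        rw [Nat.mod_add_div, ZMod.natCast_zmod_val]
    _ = _ := by
        rw [mul_nsmul', ht]
        push_cast
        ring

theorem synchronous_disjoint_circuits_exactly_k_fixed_points_general {α : Type*} [MetricSpace α]
    [CompleteSpace α]
    (m r k : ℕ) (hm : 2 ≤ m)
    (hk : k = Nat.gcd m r)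
    (X : ZMod m → Set α) (hne : ∀ i, (X i).Nonempty) (hcl : ∀ i, IsClosed (X i))
    (hcov : (⋃ i, X i) = Set.univ) (f : α → α)
    (hcyc : ∀ i, ∀ x ∈ X i, f x ∈ X (i + (r : ZMod m)))
    (c : ℝ) (hc0 : 0 ≤ c) (hc1 : c < 1)
    (hcontr : ∀ i, ∀ x ∈ X i, ∀ y ∈ X (i + (r : ZMod m)),
      dist (f x) (f y) ≤ c * dist x y)
    (Y : ℕ → Set α)
    (hY : ∀ j, Y j = ⋃ i ∈ Finset.range (m / k), X ((j : ZMod m) + ((i * r : ℕ) : ZMod m)))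
    (hdisj : ∀ j₁ < k, ∀ j₂ < k, j₁ ≠ j₂ → Disjoint (Y j₁) (Y j₂)) :
    ∃ F : Fin k → α, (∀ j : Fin k, f (F j) = F j ∧ F j ∈ Y j) ∧
      Function.Injective F ∧ ∀ x : α, f x = x → ∃ j : Fin k, x = F j := by
  have : NeZero m := ⟨by omega⟩
  have hf : IsCyclicContraction X r c f := ⟨fun i _ hx ↦ hcyc i _ hx, hcontr⟩
  have hXY (j : ℕ) : X j ⊆ Y j := by
    have hkm : k ≤ m := hk ▸ Nat.gcd_le_left r (NeZero.pos m)
    have hk0 : 0 < k := hk ▸ Nat.gcd_pos_of_pos_left r (NeZero.pos m)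
    intro x hx
    rw [hY]
    exact mem_iUnion₂.2 ⟨0, Finset.mem_range.2 (Nat.div_pos hkm hk0), by simpa using hx⟩
  choose F hFX hFfix using fun j : Fin k ↦
    hf.exists_isFixedPt_mem hcl (isOfFinAddOrder_of_finite _) hc0 hc1 (hne (j : ℕ))
  refine ⟨F, fun j ↦ ⟨hFfix j, hXY j (hFX j)⟩, fun j₁ j₂ hF ↦ ?_, fun x hx ↦ ?_⟩
  · by_contra hne
    exact (hdisj j₁ j₁.2 j₂ j₂.2 (Fin.val_ne_of_ne hne)).ne_of_mem
      (hXY _ (hFX j₁)) (hXY _ (hFX j₂)) hF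
  · obtain ⟨i, hi⟩ := mem_iUnion.1 (hcov ▸ mem_univ x)
    obtain ⟨j, hj, n, rfl⟩ := ZMod.exists_lt_gcd_add_nsmul r i
    refine ⟨⟨j, hk ▸ hj⟩, hf.eq_of_isFixedPt_of_mem_add_nsmul hc1 hx (hFfix _) hi (b := 0) ?_⟩
    simpa using hFX ⟨j, hk ▸ hj⟩

theorem synchronous_disjoint_circuits_exactly_k_fixed_points {α : Type*} [MetricSpace α]
    [CompleteSpace α]
    (m r k : ℕ) (hm : 2 ≤ m) (hr : 1 ≤ r) (hrm : r < m)
    (hk : k = Nat.gcd m r) (hk1 : 1 < k)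
    (X : ZMod m → Set α) (hne : ∀ i, (X i).Nonempty) (hcl : ∀ i, IsClosed (X i))
    (hcov : (⋃ i, X i) = Set.univ) (f : α → α)
    (hcyc : ∀ i, ∀ x ∈ X i, f x ∈ X (i + (r : ZMod m)))
    (c : ℝ) (hc0 : 0 ≤ c) (hc1 : c < 1)
    (hcontr : ∀ i, ∀ x ∈ X i, ∀ y ∈ X (i + (r : ZMod m)),
      dist (f x) (f y) ≤ c * dist x y)
    (Y : ℕ → Set α)
    (hY : ∀ j, Y j = ⋃ i ∈ Finset.range (m / k), X ((j : ZMod m) + ((i * r : ℕ) : ZMod m)))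
    (hdisj : ∀ j₁ < k, ∀ j₂ < k, j₁ ≠ j₂ → Disjoint (Y j₁) (Y j₂)) :
    ∃ F : Fin k → α, (∀ j : Fin k, f (F j) = F j ∧ F j ∈ Y j) ∧
      Function.Injective F ∧ ∀ x : α, f x = x → ∃ j : Fin k, x = F j :=
  synchronous_disjoint_circuits_exactly_k_fixed_points_general m r k hm hk X hne hcl hcov f hcyc c
    hc0 hc1 hcontr Y hY hdisj
end

section
/- Under the hypotheses of the synchronous r-cyclic contraction theorem with gcd(m, r) = k > 1, if ⋂_{j=1}^k Y_j ≠ ∅ (where Y_j = ⋃_{i=0}^{m/k−1} X_{j+i·r}), then f has a unique fixed point, which lies in ⋂_{i=1}^m X_i, and the Picard iteration starting from any point of X converges to it. -/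
open Filter Topology

theorem synchronous_common_point_unique_fixed_point {α : Type*} [MetricSpace α] [CompleteSpace α]
    (m r k : ℕ) (hm : 2 ≤ m) (hr : 1 ≤ r) (hrm : r < m)
    (hk : k = Nat.gcd m r) (hk1 : 1 < k)
    (X : ZMod m → Set α) (hne : ∀ i, (X i).Nonempty) (hcl : ∀ i, IsClosed (X i))
    (hcov : (⋃ i, X i) = Set.univ) (f : α → α)
    (hcyc : ∀ i, ∀ x ∈ X i, f x ∈ X (i + (r : ZMod m)))
    (c : ℝ) (hc0 : 0 ≤ c) (hc1 : c < 1)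
    (hcontr : ∀ i, ∀ x ∈ X i, ∀ y ∈ X (i + (r : ZMod m)),
      dist (f x) (f y) ≤ c * dist x y)
    (Y : ℕ → Set α)
    (hY : ∀ j, Y j = ⋃ i ∈ Finset.range (m / k), X ((j : ZMod m) + ((i * r : ℕ) : ZMod m)))
    (hmeet : (⋂ j ∈ Finset.range k, Y j).Nonempty) :
    ∃ xs : α, f xs = xs ∧ (∀ y, f y = y → y = xs) ∧ xs ∈ (⋂ i, X i) ∧
      ∀ x₀ : α, Tendsto (fun n => f^[n] x₀) atTop (𝓝 xs) := by
  haveI : NeZero m := ⟨by omega⟩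
  have hk0 : 0 < k := by omega
  -- iterate membership
  have hiter : ∀ (a : ZMod m) (x : α), x ∈ X a → ∀ n : ℕ,
      f^[n] x ∈ X (a + ((n * r : ℕ) : ZMod m)) := by
    intro a x hx n
    induction n with
    | zero => simpa using hx
    | succ n ih =>
      have h := hcyc _ _ ih
      rw [Function.iterate_succ_apply']
      convert h using 2
      push_cast
      ring
  have hmem : ∀ x : α, ∃ a, x ∈ X a := by
    intro x
    have : x ∈ ⋃ i, X i := hcov ▸ Set.mem_univ x
    simpa using this
  obtain ⟨p, hp⟩ := hmeet
  simp only [Set.mem_iInter, Finset.mem_range] at hp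
  obtain ⟨a0, hpa0⟩ := hmem p
  set u : ℕ → α := fun n => f^[n] p with hu
  -- Cauchy
  have hstep : ∀ n, dist (u n) (u (n + 1)) ≤ dist p (f p) * c ^ n := by
    intro n
    induction n with
    | zero => simp [u]
    | succ n ih =>
      have hx := hiter a0 p hpa0 n
      have hy : u (n + 1) ∈ X (a0 + ((n * r : ℕ) : ZMod m) + (r : ZMod m)) := by
        have := hiter a0 p hpa0 (n + 1)
        convert this using 2
        push_cast
        ring
      have h := hcontr _ _ hx _ hy
      have h1 : u (n + 2) = f (u (n + 1)) := Function.iterate_succ_apply' f (n + 1) p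
      have h2 : u (n + 1) = f (u n) := Function.iterate_succ_apply' f n p
      calc dist (u (n + 1)) (u (n + 2)) = dist (f (u n)) (f (u (n + 1))) := by rw [h1, h2]
        _ ≤ c * dist (u n) (u (n + 1)) := h
        _ ≤ c * (dist p (f p) * c ^ n) := by
            exact mul_le_mul_of_nonneg_left ih hc0
        _ = dist p (f p) * c ^ (n + 1) := by ring
  have hcauchy : CauchySeq u := cauchySeq_of_le_geometric c (dist p (f p)) hc1 hstep
  obtain ⟨xs, htend⟩ := cauchySeq_tendsto_of_complete hcauchy
  -- Bezout : k is an r-multiple mod m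
  have hbez : ∃ w : ZMod m, (k : ZMod m) = (r : ZMod m) * w := by
    refine ⟨((Nat.gcdB m r : ℤ) : ZMod m), ?_⟩
    have h := Nat.gcd_eq_gcd_ab m r
    have h2 : ((Nat.gcd m r : ℤ) : ZMod m)
        = (((m : ℤ) * Nat.gcdA m r + (r : ℤ) * Nat.gcdB m r : ℤ) : ZMod m) := by
      exact_mod_cast congrArg (fun z : ℤ => (z : ZMod m)) h
    rw [hk]
    push_cast at h2 ⊢
    rw [h2]
    simp [ZMod.natCast_self]
  obtain ⟨w, hw⟩ := hbez
  -- the limit is in every X b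
  have hxsb : ∀ b : ZMod m, xs ∈ X b := by
    intro b
    set j := b.val % k with hj'
    have hj : j < k := Nat.mod_lt _ hk0
    have hpj : p ∈ Y j := hp j hj
    rw [hY] at hpj
    simp only [Set.mem_iUnion] at hpj
    obtain ⟨i, _, hpi⟩ := hpj
    set t := b.val / k with ht'
    have hbval : ((b.val : ℕ) : ZMod m) = b := ZMod.natCast_rightInverse b
    have hb : b = ((k * t + j : ℕ) : ZMod m) := by
      rw [← hbval]
      congr 1
      rw [ht', hj']
      have h := Nat.div_add_mod b.val k
      omega
    set n := (w * (t : ZMod m) - (i : ZMod m)).val with hn'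
    have hn : ((n : ℕ) : ZMod m) = w * (t : ZMod m) - (i : ZMod m) := ZMod.natCast_rightInverse _
    have hidx : ∀ q : ℕ,
        ((j : ZMod m) + ((i * r : ℕ) : ZMod m)) + (((n + q * m) * r : ℕ) : ZMod m) = b := by
      intro q
      rw [hb]
      push_cast
      rw [hn, ZMod.natCast_self]
      linear_combination -(t : ZMod m) * hw
    have hsub : Tendsto (fun q : ℕ => n + q * m) atTop atTop := by
      refine tendsto_atTop_mono (fun q => ?_) tendsto_id
      calc (q : ℕ) = q * 1 := (mul_one q).symm
        _ ≤ q * m := Nat.mul_le_mul_left q (by omega)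
        _ ≤ n + q * m := Nat.le_add_left _ _
    have htend' : Tendsto (fun q : ℕ => f^[n + q * m] p) atTop (𝓝 xs) := htend.comp hsub
    refine (hcl b).mem_of_tendsto htend' (Filter.Eventually.of_forall fun q => ?_)
    have := hiter _ p hpi (n + q * m)
    rwa [hidx q] at this
  -- fixed point
  have hfxs : f xs = xs := by
    have h1 : Tendsto (fun n => u (n + 1)) atTop (𝓝 xs) :=
      htend.comp (tendsto_add_atTop_nat 1)
    have hd : Tendsto (fun n => dist (u n) xs) atTop (𝓝 0) :=
      tendsto_iff_dist_tendsto_zero.mp htend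
    have hbound : ∀ n, dist (u (n + 1)) (f xs) ≤ c * dist (u n) xs := by
      intro n
      have hx := hiter a0 p hpa0 n
      have hy : xs ∈ X (a0 + ((n * r : ℕ) : ZMod m) + (r : ZMod m)) := hxsb _
      have h := hcontr _ _ hx _ hy
      have h2 : u (n + 1) = f (u n) := Function.iterate_succ_apply' f n p
      rw [h2]
      exact h
    have h2 : Tendsto (fun n => u (n + 1)) atTop (𝓝 (f xs)) := by
      rw [tendsto_iff_dist_tendsto_zero]
      refine squeeze_zero (fun n => dist_nonneg) hbound ?_
      have := hd.const_mul c
      simpa using this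
    exact tendsto_nhds_unique h2 h1
  -- geometric convergence from any point
  have hconv : ∀ x₀ : α, ∀ n, dist (f^[n] x₀) xs ≤ c ^ n * dist x₀ xs := by
    intro x₀
    obtain ⟨a, ha⟩ := hmem x₀
    intro n
    induction n with
    | zero => simp
    | succ n ih =>
      have hx := hiter a x₀ ha n
      have hy : xs ∈ X (a + ((n * r : ℕ) : ZMod m) + (r : ZMod m)) := hxsb _
      have h := hcontr _ _ hx _ hy
      rw [hfxs] at h
      calc dist (f^[n + 1] x₀) xs = dist (f (f^[n] x₀)) xs := by
            rw [Function.iterate_succ_apply']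
        _ ≤ c * dist (f^[n] x₀) xs := h
        _ ≤ c * (c ^ n * dist x₀ xs) := mul_le_mul_of_nonneg_left ih hc0
        _ = c ^ (n + 1) * dist x₀ xs := by ring
  refine ⟨xs, hfxs, ?_, Set.mem_iInter.mpr hxsb, ?_⟩
  · intro y hy
    have h1 := hconv y 1
    simp only [Function.iterate_one, pow_one] at h1
    rw [hy] at h1
    have : dist y xs = 0 := by nlinarith [dist_nonneg (x := y) (y := xs)]
    exact dist_eq_zero.mp this
  · intro x₀
    rw [tendsto_iff_dist_tendsto_zero]
    refine squeeze_zero (fun n => dist_nonneg) (hconv x₀) ?_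
    have := (tendsto_pow_atTop_nhds_zero_of_lt_one hc0 hc1).mul_const (dist x₀ xs)
    simpa using this
end

section
/- Let (X, d) be a complete metric space, X = X_1 ∪ ... ∪ X_m (m ≥ 3) a covering by nonempty closed sets, 1 ≤ r < m, and f : X → X an asynchronous r-cyclic contraction with constant c ∈ [0,1): f(X_i) ⊆ X_{i+r} and d(f(x), f(y)) ≤ c·d(x, y) for all x ∈ X_i, y ∈ X_{i+1}, indices mod m. Then f has a unique fixed point in X, obtainable as the limit of the Picard iteration from any starting point in X. -/
/-!
Iterates of two points lying in consecutive sets of the covering approach each other like `c ^ n`.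
Since `ZMod m` is generated by `1`, chaining through one point of each set shows that any two orbits
do, so every orbit is Cauchy and all orbits share one limit `xs`. The orbit of a point of `X i`
returns to `X i` every `m` steps, hence `xs` lies in every `X i`; so `f` is `c`-Lipschitz at `xs`,
hence continuous there, and `xs` is fixed.
-/

open Filter Topology Function Set

section Asymptotic

variable {α : Type*} [PseudoMetricSpace α]

def GeometricallyAsymptotic (f : α → α) (c : ℝ) (x y : α) : Prop :=
  ∃ C, ∀ n, dist (f^[n] x) (f^[n] y) ≤ C * c ^ n

namespace GeometricallyAsymptotic

variable {f : α → α} {c : ℝ} {x y z : α}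

theorem symm (h : GeometricallyAsymptotic f c x y) : GeometricallyAsymptotic f c y x := by
  obtain ⟨C, hC⟩ := h
  exact ⟨C, fun n => dist_comm (f^[n] y) (f^[n] x) ▸ hC n⟩

theorem trans (hxy : GeometricallyAsymptotic f c x y) (hyz : GeometricallyAsymptotic f c y z) :
    GeometricallyAsymptotic f c x z := by
  obtain ⟨C, hC⟩ := hxy
  obtain ⟨D, hD⟩ := hyz
  refine ⟨C + D, fun n => ?_⟩
  calc dist (f^[n] x) (f^[n] z) ≤ dist (f^[n] x) (f^[n] y) + dist (f^[n] y) (f^[n] z) :=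
        dist_triangle _ _ _
    _ ≤ C * c ^ n + D * c ^ n := add_le_add (hC n) (hD n)
    _ = (C + D) * c ^ n := by ring

theorem cauchySeq_iterate (hc1 : c < 1) (h : GeometricallyAsymptotic f c x (f x)) :
    CauchySeq fun n => f^[n] x := by
  obtain ⟨C, hC⟩ := h
  refine cauchySeq_of_le_geometric c C hc1 fun n => ?_
  simpa only [iterate_succ_apply] using hC n

theorem tendsto_iterate (hc0 : 0 ≤ c) (hc1 : c < 1) (h : GeometricallyAsymptotic f c x y)
    (hx : Tendsto (fun n => f^[n] x) atTop (𝓝 z)) : Tendsto (fun n => f^[n] y) atTop (𝓝 z) := by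
  obtain ⟨C, hC⟩ := h
  refine tendsto_of_tendsto_of_dist hx (squeeze_zero (fun _ => dist_nonneg) hC ?_)
  simpa using (tendsto_pow_atTop_nhds_zero_of_lt_one hc0 hc1).const_mul C

end GeometricallyAsymptotic

end Asymptotic

theorem IsClosed.mem_of_tendsto_iterate {β : Type*} [TopologicalSpace β] {g : β → β} {S : Set β}
    {k : ℕ} {x z : β} (hS : IsClosed S) (hk : 0 < k) (hg : MapsTo g^[k] S S) (hx : x ∈ S)
    (h : Tendsto (fun n => g^[n] x) atTop (𝓝 z)) : z ∈ S :=
  hS.mem_of_tendsto (h.comp (tendsto_id.const_mul_atTop' hk))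
    (Eventually.of_forall fun j => by
      simpa only [comp_apply, id_eq, iterate_mul] using hg.iterate j hx)

theorem mapsTo_iterate_of_mapsTo_add {α ι : Type*} [AddMonoid ι] {X : ι → Set α} {f : α → α}
    {s : ι} (hcyc : ∀ i, MapsTo f (X i) (X (i + s))) (n : ℕ) (i : ι) :
    MapsTo f^[n] (X i) (X (i + n • s)) := by
  induction n with
  | zero => simpa using mapsTo_id (X i)
  | succ n ih =>
    rw [iterate_succ', succ_nsmul, ← add_assoc]
    exact (hcyc _).comp ih

section CyclicCovering

variable {α ι : Type*} [PseudoMetricSpace α] [AddCommMonoid ι] {X : ι → Set α} {f : α → α}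
  {s t : ι} {c : ℝ}

theorem dist_iterate_le_of_mem_add (hc0 : 0 ≤ c) (hcyc : ∀ i, MapsTo f (X i) (X (i + s)))
    (hcontr : ∀ i, ∀ x ∈ X i, ∀ y ∈ X (i + t), dist (f x) (f y) ≤ c * dist x y) (n : ℕ) :
    ∀ {i x y}, x ∈ X i → y ∈ X (i + t) → dist (f^[n] x) (f^[n] y) ≤ c ^ n * dist x y := by
  induction n with
  | zero => simp
  | succ n ih =>
    intro i x y hx hy
    have hfy : f y ∈ X (i + s + t) := add_right_comm i t s ▸ hcyc _ hy
    calc dist (f^[n + 1] x) (f^[n + 1] y) = dist (f^[n] (f x)) (f^[n] (f y)) := rfl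
      _ ≤ c ^ n * dist (f x) (f y) := ih (hcyc i hx) hfy
      _ ≤ c ^ n * (c * dist x y) := by gcongr; exact hcontr i x hx y hy
      _ = c ^ (n + 1) * dist x y := by ring

theorem geometricallyAsymptotic_of_mem_add (hc0 : 0 ≤ c) (hcyc : ∀ i, MapsTo f (X i) (X (i + s)))
    (hcontr : ∀ i, ∀ x ∈ X i, ∀ y ∈ X (i + t), dist (f x) (f y) ≤ c * dist x y)
    {i : ι} {x y : α} (hx : x ∈ X i) (hy : y ∈ X (i + t)) :
    GeometricallyAsymptotic f c x y :=
  ⟨dist x y, fun n => (dist_iterate_le_of_mem_add hc0 hcyc hcontr n hx hy).trans_eq (mul_comm _ _)⟩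

theorem geometricallyAsymptotic_of_mem_add_nsmul (hne : ∀ i, (X i).Nonempty) (hc0 : 0 ≤ c)
    (hcyc : ∀ i, MapsTo f (X i) (X (i + s)))
    (hcontr : ∀ i, ∀ x ∈ X i, ∀ y ∈ X (i + t), dist (f x) (f y) ≤ c * dist x y) (k : ℕ)
    {i : ι} {x y : α} (hx : x ∈ X i) (hy : y ∈ X (i + k • t)) :
    GeometricallyAsymptotic f c x y := by
  have consecutive {j x y} (hx : x ∈ X j) (hy : y ∈ X (j + t)) :=
    geometricallyAsymptotic_of_mem_add hc0 hcyc hcontr hx hy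
  induction k generalizing y with
  | zero =>
    obtain ⟨p, hp⟩ := hne (i + t)
    exact (consecutive hx hp).trans (consecutive (by simpa using hy) hp).symm
  | succ k ih =>
    obtain ⟨p, hp⟩ := hne (i + k • t)
    exact (ih hp).trans (consecutive hp (by rwa [succ_nsmul, ← add_assoc] at hy))

theorem geometricallyAsymptotic_of_iUnion_eq_univ (hne : ∀ i, (X i).Nonempty) (hc0 : 0 ≤ c)
    (hcyc : ∀ i, MapsTo f (X i) (X (i + s)))
    (hcontr : ∀ i, ∀ x ∈ X i, ∀ y ∈ X (i + t), dist (f x) (f y) ≤ c * dist x y)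
    (hcov : ⋃ i, X i = univ) (hgen : ∀ i j, ∃ k : ℕ, j = i + k • t) (x y : α) :
    GeometricallyAsymptotic f c x y := by
  obtain ⟨i, hx⟩ := mem_iUnion.mp (hcov ▸ mem_univ x)
  obtain ⟨j, hy⟩ := mem_iUnion.mp (hcov ▸ mem_univ y)
  obtain ⟨k, rfl⟩ := hgen i j
  exact geometricallyAsymptotic_of_mem_add_nsmul hne hc0 hcyc hcontr k hx hy

theorem continuousAt_of_forall_mem (hcov : ⋃ i, X i = univ)
    (hcontr : ∀ i, ∀ x ∈ X i, ∀ y ∈ X (i + t), dist (f x) (f y) ≤ c * dist x y) {z : α}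
    (hz : ∀ i, z ∈ X i) : ContinuousAt f z := by
  refine continuousAt_of_locally_lipschitz one_pos c fun y _ => ?_
  obtain ⟨i, hy⟩ := mem_iUnion.mp (hcov ▸ mem_univ y)
  exact hcontr i y hy z (hz _)

end CyclicCovering

theorem asynchronous_r_cyclic_contraction_Picard_general {α : Type*} [MetricSpace α] [CompleteSpace α]
    (m r : ℕ) (hm : 3 ≤ m)
    (X : ZMod m → Set α) (hne : ∀ i, (X i).Nonempty) (hcl : ∀ i, IsClosed (X i))
    (hcov : (⋃ i, X i) = Set.univ) (f : α → α)
    (hcyc : ∀ i, ∀ x ∈ X i, f x ∈ X (i + (r : ZMod m)))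
    (c : ℝ) (hc0 : 0 ≤ c) (hc1 : c < 1)
    (hcontr : ∀ i, ∀ x ∈ X i, ∀ y ∈ X (i + 1), dist (f x) (f y) ≤ c * dist x y) :
    ∃ xs : α, f xs = xs ∧ (∀ y, f y = y → y = xs) ∧
      ∀ x₀ : α, Tendsto (fun n => f^[n] x₀) atTop (𝓝 xs) := by
  have : NeZero m := ⟨by omega⟩
  have hasymp : ∀ x y, GeometricallyAsymptotic f c x y :=
    geometricallyAsymptotic_of_iUnion_eq_univ hne hc0 hcyc hcontr hcov
      fun i j => ⟨(j - i).val, by simp⟩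
  obtain ⟨x₁, -⟩ := hne 0
  obtain ⟨xs, hxs⟩ := cauchySeq_tendsto_of_complete ((hasymp x₁ (f x₁)).cauchySeq_iterate hc1)
  have htend : ∀ x₀, Tendsto (fun n => f^[n] x₀) atTop (𝓝 xs) :=
    fun x₀ => (hasymp x₁ x₀).tendsto_iterate hc0 hc1 hxs
  have hmem : ∀ i, xs ∈ X i := fun i => by
    obtain ⟨p, hp⟩ := hne i
    refine (hcl i).mem_of_tendsto_iterate (Nat.pos_of_neZero m) ?_ hp (htend p)
    simpa using mapsTo_iterate_of_mapsTo_add hcyc m i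
  have hfix : f xs = xs :=
    isFixedPt_of_tendsto_iterate hxs (continuousAt_of_forall_mem hcov hcontr hmem)
  refine ⟨xs, hfix, fun y hy => tendsto_nhds_unique ?_ (htend y), htend⟩
  simpa only [iterate_fixed hy] using tendsto_const_nhds

theorem asynchronous_r_cyclic_contraction_Picard {α : Type*} [MetricSpace α] [CompleteSpace α]
    (m r : ℕ) (hm : 3 ≤ m) (hr : 1 ≤ r) (hrm : r < m)
    (X : ZMod m → Set α) (hne : ∀ i, (X i).Nonempty) (hcl : ∀ i, IsClosed (X i))
    (hcov : (⋃ i, X i) = Set.univ) (f : α → α)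
    (hcyc : ∀ i, ∀ x ∈ X i, f x ∈ X (i + (r : ZMod m)))
    (c : ℝ) (hc0 : 0 ≤ c) (hc1 : c < 1)
    (hcontr : ∀ i, ∀ x ∈ X i, ∀ y ∈ X (i + 1), dist (f x) (f y) ≤ c * dist x y) :
    ∃ xs : α, f xs = xs ∧ (∀ y, f y = y → y = xs) ∧
      ∀ x₀ : α, Tendsto (fun n => f^[n] x₀) atTop (𝓝 xs) :=
  asynchronous_r_cyclic_contraction_Picard_general m r hm X hne hcl hcov f hcyc c hc0 hc1 hcontr
end
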